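/- arXiv:2511.06812 — 2 statements merged into one kernel-verified Lean document; each statement's English description precedes it below -/
import Mathlib

section
/- Let P(·|x,a,μ) be a family of probability transition kernels on a measurable state space X. Suppose there exists α > 0 such that for all states x, y, all measures μ, ν, and a fixed policy π, the total variation bound ‖P(·|x,π(x),μ) − P(·|y,π(y),ν)‖₁ ≤ 2(1−α) holds, and there exists λ ∈ [0,α) such that d_TV(P(·|x,π(x),μ), P(·|x,π(x),ν)) ≤ λ · d_TV(μ, ν) for all x, μ, ν. Then the map μ ↦ μP^{π,μ}, defined by (μP^{π,μ})(B) = ∫ P(B|x,π(x),μ) dμ(x), satisfies ‖μP^{π,μ} − νP^{π,ν}‖₁ ≤ (1−α+λ)‖μ−ν‖₁ for all probability measures μ, ν. -/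
/-!
Write `μP^{π,μ} - νP^{π,ν} = (μ - ν)P^{π,μ} + ν(P^{π,μ} - P^{π,ν})`. The first term is a zero-mass
signed measure pushed through a kernel whose rows are `2(1 - α)`-close in `ℓ¹`, so Dobrushin's
bound shrinks it by `1 - α`; the second is at most `λ‖μ - ν‖₁` by the Lipschitz hypothesis.
Dobrushin's bound itself comes from splitting `f = f⁺ - f⁻` with `∑ f⁺ = ∑ f⁻ = s`, which gives
`s · fQ = ∑_{x,y} f⁺(x) f⁻(y) (Q x - Q y)`.
-/

open Finset

section
variable {X : Type*} [Fintype X]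

lemma sum_posPart_eq_sum_negPart {f : X → ℝ} (hf : ∑ x, f x = 0) :
    ∑ x, (f x)⁺ = ∑ x, (f x)⁻ := by
  rw [← sub_eq_zero, ← sum_sub_distrib]
  simpa only [posPart_sub_negPart] using hf

lemma sum_abs_eq_two_mul_sum_negPart {f : X → ℝ} (hf : ∑ x, f x = 0) :
    ∑ x, |f x| = 2 * ∑ x, (f x)⁻ := by
  simp_rw [← posPart_add_negPart, sum_add_distrib, sum_posPart_eq_sum_negPart hf]
  ring

lemma sum_negPart_mul_sum_mul_eq (Q : X → X → ℝ) {f : X → ℝ} (hf : ∑ x, f x = 0) (x' : X) :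
    (∑ y, (f y)⁻) * ∑ x, f x * Q x x'
      = ∑ x, ∑ y, (f x)⁺ * (f y)⁻ * (Q x x' - Q y x') := by
  have hsplit : ∑ x, f x * Q x x' = ∑ x, (f x)⁺ * Q x x' - ∑ y, (f y)⁻ * Q y x' := by
    rw [← sum_sub_distrib]
    exact sum_congr rfl fun x _ => by rw [← sub_mul, posPart_sub_negPart]
  have hexpand : ∑ x, ∑ y, (f x)⁺ * (f y)⁻ * (Q x x' - Q y x')
      = (∑ x, (f x)⁺ * Q x x') * ∑ y, (f y)⁻ - (∑ x, (f x)⁺) * ∑ y, (f y)⁻ * Q y x' := by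
    simp only [sum_mul_sum, ← sum_sub_distrib]
    exact sum_congr rfl fun x _ => sum_congr rfl fun y _ => by ring
  rw [hsplit, hexpand, sum_posPart_eq_sum_negPart hf]
  ring

theorem sum_abs_sum_mul_le_of_sum_eq_zero (Q : X → X → ℝ) {c : ℝ}
    (hQ : ∀ x y, ∑ x', |Q x x' - Q y x'| ≤ c) {f : X → ℝ} (hf : ∑ x, f x = 0) :
    ∑ x', |∑ x, f x * Q x x'| ≤ c / 2 * ∑ x, |f x| := by
  set s := ∑ y, (f y)⁻ with hs
  have hs0 : 0 ≤ s := sum_nonneg fun y _ => negPart_nonneg _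
  rw [sum_abs_eq_two_mul_sum_negPart hf, ← hs, show c / 2 * (2 * s) = c * s by ring]
  have hweight : ∀ x y, 0 ≤ (f x)⁺ * (f y)⁻ := fun x y =>
    mul_nonneg (posPart_nonneg _) (negPart_nonneg _)
  have hscaled : s * ∑ x', |∑ x, f x * Q x x'| ≤ s * (c * s) :=
    calc s * ∑ x', |∑ x, f x * Q x x'|
        = ∑ x', |∑ x, ∑ y, (f x)⁺ * (f y)⁻ * (Q x x' - Q y x')| := by
          rw [mul_sum]
          refine sum_congr rfl fun x' _ => ?_
          rw [← abs_of_nonneg hs0, ← abs_mul, hs, sum_negPart_mul_sum_mul_eq Q hf]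
      _ ≤ ∑ x', ∑ x, ∑ y, (f x)⁺ * (f y)⁻ * |Q x x' - Q y x'| := by
          gcongr with x' _
          refine (abs_sum_le_sum_abs _ _).trans (sum_le_sum fun x _ => ?_)
          refine (abs_sum_le_sum_abs _ _).trans (sum_le_sum fun y _ => ?_)
          rw [abs_mul, abs_of_nonneg (hweight x y)]
      _ = ∑ x, ∑ y, (f x)⁺ * (f y)⁻ * ∑ x', |Q x x' - Q y x'| := by
          rw [sum_comm]
          simp_rw [mul_sum]
          exact sum_congr rfl fun x _ => sum_comm
      _ ≤ ∑ x, ∑ y, (f x)⁺ * (f y)⁻ * c :=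
          sum_le_sum fun x _ => sum_le_sum fun y _ =>
            mul_le_mul_of_nonneg_left (hQ x y) (hweight x y)
      _ = s * (c * s) := by
          simp_rw [mul_assoc, ← mul_sum, ← sum_mul, sum_posPart_eq_sum_negPart hf, ← hs]
          ring
  rcases hs0.eq_or_lt with hs_zero | hs_pos
  · have hf_zero : ∀ x, f x = 0 := by
      have habs : ∑ x, |f x| = 0 := by
        rw [sum_abs_eq_two_mul_sum_negPart hf, ← hs, ← hs_zero, mul_zero]
      simpa using (sum_eq_zero_iff_of_nonneg fun x _ => abs_nonneg (f x)).mp habs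
    simp [hf_zero, ← hs_zero]
  · exact le_of_mul_le_mul_left hscaled hs_pos

lemma sum_abs_sum_mul_le {ν : X → ℝ} (hν : ∀ x, 0 ≤ ν x) {R : X → X → ℝ} {L : ℝ}
    (hR : ∀ x, ∑ x', |R x x'| ≤ L) :
    ∑ x', |∑ x, ν x * R x x'| ≤ L * ∑ x, ν x :=
  calc ∑ x', |∑ x, ν x * R x x'|
      ≤ ∑ x', ∑ x, ν x * |R x x'| := by
        gcongr with x' _
        refine (abs_sum_le_sum_abs _ _).trans (sum_le_sum fun x _ => ?_)
        rw [abs_mul, abs_of_nonneg (hν x)]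
    _ = ∑ x, ν x * ∑ x', |R x x'| := by
        rw [sum_comm]
        simp_rw [mul_sum]
    _ ≤ ∑ x, ν x * L := sum_le_sum fun x _ => mul_le_mul_of_nonneg_left (hR x) (hν x)
    _ = L * ∑ x, ν x := by rw [← sum_mul, mul_comm]

end

theorem mean_field_kernel_contraction_general
    {X A : Type*} [Fintype X]
    (P : X → A → (X → ℝ) → X → ℝ)   -- transition density P(x'|x,a,μ)
    (π : X → A)                      -- fixed policy
    (α lam : ℝ)
    (hDob : ∀ x y : X, ∀ μ ν : X → ℝ,
      ∑ x', |P x (π x) μ x' - P y (π y) ν x'| ≤ 2 * (1 - α))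
    (hLip : ∀ x : X, ∀ μ ν : X → ℝ,
      (1/2) * ∑ x', |P x (π x) μ x' - P x (π x) ν x'|
        ≤ lam * ((1/2) * ∑ x', |μ x' - ν x'|)) :
    ∀ μ ν : X → ℝ,
      ((∀ x, 0 ≤ μ x) ∧ ∑ x, μ x = 1) →
      ((∀ x, 0 ≤ ν x) ∧ ∑ x, ν x = 1) →
      ∑ x', |(∑ x, μ x * P x (π x) μ x') - (∑ x, ν x * P x (π x) ν x')|
        ≤ (1 - α + lam) * ∑ x, |μ x - ν x| := by
  intro μ ν hμ hν
  have hsplit : ∀ x', (∑ x, μ x * P x (π x) μ x') - (∑ x, ν x * P x (π x) ν x')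
      = (∑ x, (μ x - ν x) * P x (π x) μ x') + ∑ x, ν x * (P x (π x) μ x' - P x (π x) ν x') :=
    fun x' => by
      rw [← sum_add_distrib, ← sum_sub_distrib]
      exact sum_congr rfl fun x _ => by ring
  have hdrift := sum_abs_sum_mul_le_of_sum_eq_zero (fun x => P x (π x) μ)
    (fun x y => hDob x y μ μ) (f := fun x => μ x - ν x)
    (by rw [sum_sub_distrib, hμ.2, hν.2, sub_self])
  have hfield := sum_abs_sum_mul_le hν.1 (R := fun x x' => P x (π x) μ x' - P x (π x) ν x')
    (L := lam * ∑ x, |μ x - ν x|) (fun x => by linarith [hLip x μ ν])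
  calc ∑ x', |(∑ x, μ x * P x (π x) μ x') - (∑ x, ν x * P x (π x) ν x')|
      ≤ ∑ x', (|∑ x, (μ x - ν x) * P x (π x) μ x'|
          + |∑ x, ν x * (P x (π x) μ x' - P x (π x) ν x')|) :=
        sum_le_sum fun x' _ => (hsplit x').symm ▸ abs_add_le _ _
    _ = ∑ x', |∑ x, (μ x - ν x) * P x (π x) μ x'|
          + ∑ x', |∑ x, ν x * (P x (π x) μ x' - P x (π x) ν x')| := sum_add_distrib
    _ ≤ 2 * (1 - α) / 2 * ∑ x, |μ x - ν x| + (lam * ∑ x, |μ x - ν x|) * ∑ x, ν x :=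
        add_le_add hdrift hfield
    _ = (1 - α + lam) * ∑ x, |μ x - ν x| := by rw [hν.2]; ring

/-- contraction estimate for the mean-field transition map.
State space `X` and action space `A` are finite; probability measures on `X` are
represented as nonnegative functions summing to one, with total variation norm
`‖μ − ν‖₁ = ∑ x |μ x − ν x|` and `d_TV = ½ ‖·‖₁`. -/
theorem mean_field_kernel_contraction
    {X A : Type*} [Fintype X] [Fintype A]
    (P : X → A → (X → ℝ) → X → ℝ)   -- transition density P(x'|x,a,μ)
    (π : X → A)                      -- fixed policy
    (hP_prob : ∀ x a μ, (∀ x', 0 ≤ P x a μ x') ∧ ∑ x', P x a μ x' = 1)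
    (α lam : ℝ) (hα : 0 < α) (hlam0 : 0 ≤ lam) (hlamα : lam < α)
    (hDob : ∀ x y : X, ∀ μ ν : X → ℝ,
      ∑ x', |P x (π x) μ x' - P y (π y) ν x'| ≤ 2 * (1 - α))
    (hLip : ∀ x : X, ∀ μ ν : X → ℝ,
      (1/2) * ∑ x', |P x (π x) μ x' - P x (π x) ν x'|
        ≤ lam * ((1/2) * ∑ x', |μ x' - ν x'|)) :
    ∀ μ ν : X → ℝ,
      ((∀ x, 0 ≤ μ x) ∧ ∑ x, μ x = 1) →
      ((∀ x, 0 ≤ ν x) ∧ ∑ x, ν x = 1) →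
      ∑ x', |(∑ x, μ x * P x (π x) μ x') - (∑ x, ν x * P x (π x) ν x')|
        ≤ (1 - α + lam) * ∑ x, |μ x - ν x| :=
  mean_field_kernel_contraction_general P π α lam hDob hLip
end

section
/- Let β > 0, σ > 0, c₁, c₂, c₃, c₄, c₅ ∈ ℝ with c₁ + c₃ > 0. Define Γ₂ = (−β + √(β² + 8(c₁+c₃)))/4, Γ₁ = −2Γ₂c₃c₄ / (Γ₂(β + 2Γ₂) − c₁c₂), and Γ₀ = (c₅m² + c₃c₄² + c₁c₂²m² + σ²Γ₂ − ½Γ₁²)/β where m = −Γ₁/(2Γ₂). Assume Γ₂(β + 2Γ₂) ≠ c₁c₂ and Γ₂ > 0. Then the function v(x) = Γ₂x² + Γ₁x + Γ₀ satisfies the stationary HJB equation β v(x) = min over a ∈ ℝ of [½a² + c₁(x − c₂m)² + c₃(x − c₄)² + c₅m² + a·v'(x) + ½σ²v''(x)], with the minimum attained at a = −v'(x) = −(2Γ₂x + Γ₁). -/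
/-!
Substituting the minimizer `a = -v'(x)` turns the Hamiltonian into `-½ v'(x)² + (running cost) + σ² Γ₂`,
a quadratic polynomial in `x`, so the HJB equation reduces to matching the coefficients of
`x²`, `x` and `1`. The `x²` coefficient is the Riccati equation `2Γ₂² + βΓ₂ = c₁ + c₃`, of which
`Γ₂` is the positive root; the `x` coefficient is the linear equation defining `Γ₁` once the
consistency relation `2Γ₂ m = -Γ₁` is used; the constant term is the definition of `Γ₀`.
-/

theorem neg_half_sq_le_half_sq_add_mul (a p : ℝ) :
    (1 / 2) * (-p) ^ 2 + -p * p ≤ (1 / 2) * a ^ 2 + a * p := by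
  nlinarith [sq_nonneg (a + p)]

theorem riccati_root_eq {β k : ℝ} (h : 0 ≤ β ^ 2 + 8 * k) :
    2 * ((-β + √(β ^ 2 + 8 * k)) / 4) ^ 2 + β * ((-β + √(β ^ 2 + 8 * k)) / 4) = k := by
  have hsq := Real.sq_sqrt h
  linear_combination hsq / 8

theorem hjb_linear_coeff_eq {β Γ₂ Γ₁ m c₁ c₂ c₃ c₄ : ℝ} (hΓ₂ : Γ₂ ≠ 0)
    (hΓ₁ : Γ₁ * (Γ₂ * (β + 2 * Γ₂) - c₁ * c₂) = -(2 * Γ₂ * c₃ * c₄))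
    (hm : 2 * Γ₂ * m = -Γ₁) :
    β * Γ₁ = -2 * Γ₂ * Γ₁ - 2 * c₁ * c₂ * m - 2 * c₃ * c₄ := by
  refine mul_left_cancel₀ hΓ₂ ?_
  linear_combination hΓ₁ + c₁ * c₂ * hm

theorem lq_mfg_hjb_verification_general
    (β σ c₁ c₂ c₃ c₄ c₅ : ℝ) (hβ : 0 < β) (hsum : 0 < c₁ + c₃) :
    let Γ₂ := (-β + Real.sqrt (β ^ 2 + 8 * (c₁ + c₃))) / 4
    let Γ₁ := -(2 * Γ₂ * c₃ * c₄) / (Γ₂ * (β + 2 * Γ₂) - c₁ * c₂)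
    let m := -Γ₁ / (2 * Γ₂)
    let Γ₀ := (c₅ * m ^ 2 + c₃ * c₄ ^ 2 + c₁ * c₂ ^ 2 * m ^ 2 + σ ^ 2 * Γ₂
                - (1/2) * Γ₁ ^ 2) / β
    let v : ℝ → ℝ := fun x => Γ₂ * x ^ 2 + Γ₁ * x + Γ₀
    let H : ℝ → ℝ → ℝ := fun x a =>
      (1/2) * a ^ 2 + c₁ * (x - c₂ * m) ^ 2 + c₃ * (x - c₄) ^ 2 + c₅ * m ^ 2
        + a * (2 * Γ₂ * x + Γ₁) + (1/2) * σ ^ 2 * (2 * Γ₂)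
    Γ₂ * (β + 2 * Γ₂) ≠ c₁ * c₂ → 0 < Γ₂ →
      ∀ x : ℝ,
        (∀ a : ℝ, H x (-(2 * Γ₂ * x + Γ₁)) ≤ H x a) ∧
        β * v x = H x (-(2 * Γ₂ * x + Γ₁)) := by
  intro Γ₂ Γ₁ m Γ₀ v H hne hΓ₂ x
  have hquad : 2 * Γ₂ ^ 2 + β * Γ₂ = c₁ + c₃ := riccati_root_eq (by positivity)
  have hΓ₁ : Γ₁ * (Γ₂ * (β + 2 * Γ₂) - c₁ * c₂) = -(2 * Γ₂ * c₃ * c₄) :=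
    div_mul_cancel₀ _ (sub_ne_zero.mpr hne)
  have hm : 2 * Γ₂ * m = -Γ₁ := mul_div_cancel₀ _ (by positivity)
  have hΓ₀ : β * Γ₀ = c₅ * m ^ 2 + c₃ * c₄ ^ 2 + c₁ * c₂ ^ 2 * m ^ 2 + σ ^ 2 * Γ₂
      - (1/2) * Γ₁ ^ 2 := mul_div_cancel₀ _ hβ.ne'
  have hlin := hjb_linear_coeff_eq hΓ₂.ne' hΓ₁ hm
  refine ⟨fun a => ?_, ?_⟩
  · simp only [H]
    linarith [neg_half_sq_le_half_sq_add_mul a (2 * Γ₂ * x + Γ₁)]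
  · simp only [v, H]
    linear_combination x ^ 2 * hquad + x * hlin + hΓ₀

/-- the explicit quadratic `v(x) = Γ₂x² + Γ₁x + Γ₀` solves the
stationary HJB equation
`β v(x) = min_a [½a² + c₁(x−c₂m)² + c₃(x−c₄)² + c₅m² + a v'(x) + ½σ² v''(x)]`,
with the minimum attained at `a = −v'(x) = −(2Γ₂x + Γ₁)`. -/
theorem lq_mfg_hjb_verification
    (β σ c₁ c₂ c₃ c₄ c₅ : ℝ) (hβ : 0 < β) (hσ : 0 < σ) (hsum : 0 < c₁ + c₃) :
    let Γ₂ := (-β + Real.sqrt (β ^ 2 + 8 * (c₁ + c₃))) / 4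
    let Γ₁ := -(2 * Γ₂ * c₃ * c₄) / (Γ₂ * (β + 2 * Γ₂) - c₁ * c₂)
    let m := -Γ₁ / (2 * Γ₂)
    let Γ₀ := (c₅ * m ^ 2 + c₃ * c₄ ^ 2 + c₁ * c₂ ^ 2 * m ^ 2 + σ ^ 2 * Γ₂
                - (1/2) * Γ₁ ^ 2) / β
    let v : ℝ → ℝ := fun x => Γ₂ * x ^ 2 + Γ₁ * x + Γ₀
    let H : ℝ → ℝ → ℝ := fun x a =>
      (1/2) * a ^ 2 + c₁ * (x - c₂ * m) ^ 2 + c₃ * (x - c₄) ^ 2 + c₅ * m ^ 2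
        + a * (2 * Γ₂ * x + Γ₁) + (1/2) * σ ^ 2 * (2 * Γ₂)
    Γ₂ * (β + 2 * Γ₂) ≠ c₁ * c₂ → 0 < Γ₂ →
      ∀ x : ℝ,
        (∀ a : ℝ, H x (-(2 * Γ₂ * x + Γ₁)) ≤ H x a) ∧
        β * v x = H x (-(2 * Γ₂ * x + Γ₁)) :=
  lq_mfg_hjb_verification_general β σ c₁ c₂ c₃ c₄ c₅ hβ hsum
end
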